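/- arXiv:math/0512654 — 5 statements merged into one kernel-verified Lean document; each statement's English description precedes it below -/
import Mathlib

section
/- Let τ be the unique involution (involutive antiautomorphism) of Cl(W,q) fixing every element of W, let τ₀ be its restriction to Cl₀(W,q), and let τ' be the unique involution of Cl(V ⊕ V*, q) with τ'(x) = −x for all x ∈ V ⊕ V*. Then the isomorphism Ψ : Cl(V ⊕ V*, q) → Cl₀(W,q) extending x ↦ u·x satisfies Ψ ∘ τ' = τ₀ ∘ Ψ, i.e. Ψ is an isomorphism of algebras with involution (Cl(V ⊕ V*, q), τ') → (Cl₀(W,q), τ₀). -/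
/-!
STATEMENT 1: Let `τ` be the unique involution of `Cl(W,q)` fixing every element of `W`,
`τ₀` its restriction to the even part, and `τ'` the unique involution of `Cl(V ⊕ V*, q)`
with `τ'(x) = −x` for `x ∈ V ⊕ V*`.  Then the isomorphism `Ψ : Cl(V ⊕ V*, q) → Cl₀(W,q)`
extending `x ↦ u·x` satisfies `Ψ ∘ τ' = τ₀ ∘ Ψ`.

`W = k·u ⊕ V ⊕ V*` is realized as `k × (V* × V)` with `u = (1,0)`; the involutions are
quantified together with their characterizing properties (linearity, antimultiplicativity,
unitality and the action on generators), which determine them uniquely.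
-/

set_option maxHeartbeats 1000000
noncomputable section

open CliffordAlgebra

/-- The quadratic form `q(αu + v + f) = -α² + f(v)` on `W = k·u ⊕ (V* × V)`. -/
def qW (k V : Type*) [Field k] [AddCommGroup V] [Module k V] :
    QuadraticForm k (k × (Module.Dual k V × V)) :=
  QuadraticMap.prod (-QuadraticMap.sq) (QuadraticForm.dualProd k V)

theorem psi_intertwines_involutions (k V : Type*) [Field k] (h2 : (2 : k) ≠ 0)
    (l : ℕ) (hl : 1 ≤ l)
    [AddCommGroup V] [Module k V] [FiniteDimensional k V]
    (hdim : Module.finrank k V = l)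
    -- `τ` : the involution of `Cl(W,q)` fixing `W` pointwise
    (τ : CliffordAlgebra (qW k V) →ₗ[k] CliffordAlgebra (qW k V))
    (hτ1 : τ 1 = 1)
    (hτmul : ∀ a b : CliffordAlgebra (qW k V), τ (a * b) = τ b * τ a)
    (hτι : ∀ w : k × (Module.Dual k V × V),
      τ (CliffordAlgebra.ι (qW k V) w) = CliffordAlgebra.ι (qW k V) w)
    -- `τ'` : the involution of `Cl(V ⊕ V*, q)` with `τ'(x) = -x` on `V ⊕ V*`
    (τ' : CliffordAlgebra (QuadraticForm.dualProd k V) →ₗ[k]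
        CliffordAlgebra (QuadraticForm.dualProd k V))
    (hτ'1 : τ' 1 = 1)
    (hτ'mul : ∀ a b : CliffordAlgebra (QuadraticForm.dualProd k V),
      τ' (a * b) = τ' b * τ' a)
    (hτ'ι : ∀ x : Module.Dual k V × V,
      τ' (CliffordAlgebra.ι (QuadraticForm.dualProd k V) x) =
        - CliffordAlgebra.ι (QuadraticForm.dualProd k V) x)
    -- `Ψ` : the isomorphism onto the even Clifford algebra extending `x ↦ u·x`
    (Ψ : CliffordAlgebra (QuadraticForm.dualProd k V) ≃ₐ[k]
        CliffordAlgebra.even (qW k V))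
    (hΨ : ∀ x : Module.Dual k V × V,
      (Ψ (CliffordAlgebra.ι (QuadraticForm.dualProd k V) x) :
          CliffordAlgebra (qW k V)) =
        CliffordAlgebra.ι (qW k V) ((1 : k), 0) *
          CliffordAlgebra.ι (qW k V) ((0 : k), x)) :
    ∀ y : CliffordAlgebra (QuadraticForm.dualProd k V),
      (Ψ (τ' y) : CliffordAlgebra (qW k V)) = τ (Ψ y : CliffordAlgebra (qW k V)) := by
  intro y
  induction y using CliffordAlgebra.induction with
  | algebraMap r =>
      have h1 : τ' (algebraMap k _ r) = algebraMap k _ r := by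
        rw [Algebra.algebraMap_eq_smul_one, map_smul τ', hτ'1]
      rw [h1, AlgEquiv.commutes]
      have h2 : ((algebraMap k (CliffordAlgebra.even (qW k V)) r :
          CliffordAlgebra.even (qW k V)) : CliffordAlgebra (qW k V))
          = algebraMap k (CliffordAlgebra (qW k V)) r := rfl
      rw [h2, Algebra.algebraMap_eq_smul_one, map_smul τ, hτ1]
  | ι x =>
      rw [hτ'ι, map_neg Ψ, NegMemClass.coe_neg, hΨ, hτmul, hτι, hτι]
      have hpolar : QuadraticMap.polar (qW k V) ((1 : k), 0) ((0 : k), x) = 0 := by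
        simp [QuadraticMap.polar, qW]
      have h := CliffordAlgebra.ι_mul_ι_add_swap (Q := qW k V) ((1 : k), 0) ((0 : k), x)
      rw [hpolar, map_zero] at h
      rw [eq_neg_of_add_eq_zero_left h, neg_neg]
  | mul a b ha hb =>
      rw [hτ'mul, map_mul Ψ, map_mul Ψ, Subalgebra.coe_mul, Subalgebra.coe_mul,
        ha, hb, ← hτmul]
  | add a b ha hb =>
      rw [map_add τ', map_add Ψ, map_add Ψ, Subalgebra.coe_add, Subalgebra.coe_add,
        ha, hb, map_add τ]
end
end

section
/- For every v ∈ V and f ∈ V*, the operators l_v and df are skew-adjoint with respect to the bilinear form b: for all s, t ∈ ⋀V, b(l_v(s), t) = −b(s, l_v(t)) and b(df(s), t) = −b(s, df(t)). Consequently Λ is an isomorphism of algebras with involution (Cl(V ⊕ V*, q), τ') → (End_k(⋀V), τ_b), where τ' is the involution with τ'(x) = −x for x ∈ V ⊕ V* and τ_b is the adjoint involution of b. -/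
/-!
STATEMENT 5: For every `v ∈ V` and `f ∈ V*`, the operators `l_v` and `df` on `⋀V` are
skew-adjoint with respect to the bilinear form `b(s,t) = Φ(s̄ t)`:
`b(l_v(s), t) = −b(s, l_v(t))` and `b(df(s), t) = −b(s, df(t))` for all `s,t`.
Consequently `Λ` is an isomorphism of algebras with involution
`(Cl(V ⊕ V*, q), τ') → (End_k(⋀V), τ_b)`, i.e. `b(Λ(x)(s), t) = b(s, Λ(τ'(x))(t))`
for all `x ∈ Cl(V ⊕ V*, q)` and `s, t ∈ ⋀V`.

All auxiliary maps (`d`, `Φ`, `bar`, `τ'`, `Λ`) are quantified by their characterizing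
properties.
-/

noncomputable section


namespace LambdaAux

variable {k V : Type*} [Field k] [AddCommGroup V] [Module k V] {l : ℕ}

/-- Monomial in basis vectors. -/
def mon (bV : Module.Basis (Fin l) k V) {r : ℕ} (ix : Fin r → Fin l) : ExteriorAlgebra k V :=
  (List.ofFn fun j => ExteriorAlgebra.ι k (bV (ix j))).prod

lemma mon_zero (bV : Module.Basis (Fin l) k V) (ix : Fin 0 → Fin l) : mon bV ix = 1 := by
  simp [mon]

lemma mon_succ (bV : Module.Basis (Fin l) k V) {r : ℕ} (ix : Fin (r + 1) → Fin l) :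
    mon bV ix = ExteriorAlgebra.ι k (bV (ix 0)) * mon bV (ix ∘ Fin.succ) := by
  simp [mon, List.ofFn_succ]

lemma mon_eq_iMulti (bV : Module.Basis (Fin l) k V) {r : ℕ} (ix : Fin r → Fin l) :
    mon bV ix = ExteriorAlgebra.ιMulti k r (fun j => bV (ix j)) := by
  rw [ExteriorAlgebra.ιMulti_apply]; rfl

lemma strictMono_cons {n : ℕ} {a : Fin l} {g : Fin n → Fin l} (hg : StrictMono g)
    (ha : ∀ j, a < g j) : StrictMono (Fin.cons a g) := by
  intro p q hpq
  induction q using Fin.cases with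
  | zero => exact absurd hpq (Fin.not_lt_zero p).elim
  | succ j =>
    induction p using Fin.cases with
    | zero => simpa using ha j
    | succ i =>
      simp only [Fin.cons_succ]
      exact hg (by exact_mod_cast Fin.succ_lt_succ_iff.mp hpq)

end LambdaAux

namespace LambdaAux

variable {k V : Type*} [Field k] [AddCommGroup V] [Module k V] {l : ℕ}

lemma mon_mem_span (bV : Module.Basis (Fin l) k V) {n : ℕ} (p : Fin n → Fin l) :
    mon bV p ∈ Submodule.span k {x : ExteriorAlgebra k V |
      ∃ (r : ℕ) (ix : Fin r → Fin l), StrictMono ix ∧ x = mon bV ix} := by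
  by_cases hp : Function.Injective p
  · set σ := Tuple.sort p with hσ
    have hmono : StrictMono (p ∘ σ) :=
      (Tuple.monotone_sort p).strictMono_of_injective (hp.comp σ.injective)
    have hperm := (ExteriorAlgebra.ιMulti k n).map_perm (fun j => bV (p j)) σ
    have h2 : mon bV (p ∘ σ) = Equiv.Perm.sign σ • mon bV p := by
      rw [mon_eq_iMulti, mon_eq_iMulti]
      exact hperm
    have hmem : mon bV (p ∘ σ) ∈ Submodule.span k {x : ExteriorAlgebra k V |
        ∃ (r : ℕ) (ix : Fin r → Fin l), StrictMono ix ∧ x = mon bV ix} :=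
      Submodule.subset_span ⟨n, p ∘ σ, hmono, rfl⟩
    rcases Int.units_eq_one_or (Equiv.Perm.sign σ) with h | h
    · rw [h, one_smul] at h2; rw [← h2]; exact hmem
    · have : mon bV p = - mon bV (p ∘ σ) := by
        rw [h2, h]; simp
      rw [this]; exact Submodule.neg_mem _ hmem
  · obtain ⟨i, j, hij, hne⟩ : ∃ i j, p i = p j ∧ i ≠ j := by
      rw [Function.Injective] at hp; push_neg at hp
      obtain ⟨i, j, h1, h2⟩ := hp; exact ⟨i, j, h1, h2⟩
    have hz : mon bV p = 0 := by
      rw [mon_eq_iMulti]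
      exact AlternatingMap.map_eq_zero_of_eq _ _ (by rw [hij]) hne
    rw [hz]; exact Submodule.zero_mem _

lemma span_mon_top (bV : Module.Basis (Fin l) k V) :
    Submodule.span k {x : ExteriorAlgebra k V |
      ∃ (r : ℕ) (ix : Fin r → Fin l), StrictMono ix ∧ x = mon bV ix} = ⊤ := by
  refine le_antisymm le_top ?_
  rw [← ExteriorAlgebra.ιMulti_span]
  refine Submodule.span_le.2 ?_
  rintro x ⟨⟨n, w⟩, rfl⟩
  have hw : w = fun i => ∑ j : Fin l, bV.repr (w i) j • bV j :=
    funext fun i => (bV.sum_repr (w i)).symm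
  have hexp : ExteriorAlgebra.ιMulti k n w =
      ∑ r : Fin n → Fin l, (∏ i, bV.repr (w i) (r i)) •
        ExteriorAlgebra.ιMulti k n (fun i => bV (r i)) := by
    conv_lhs => rw [hw]
    rw [← AlternatingMap.coe_multilinearMap]
    rw [MultilinearMap.map_sum]
    refine Finset.sum_congr rfl fun r _ => ?_
    rw [MultilinearMap.map_smul_univ]
  show ExteriorAlgebra.ιMulti k n w ∈ _
  rw [hexp]
  refine Submodule.sum_mem _ fun r _ => Submodule.smul_mem _ _ ?_
  rw [← mon_eq_iMulti]
  exact mon_mem_span bV r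

end LambdaAux

namespace LambdaAux

variable {k V : Type*} [Field k] [AddCommGroup V] [Module k V] {l : ℕ}

lemma lemB (bV : Module.Basis (Fin l) k V)
    (d : Module.Dual k V → Module.End k (ExteriorAlgebra k V))
    (hd1 : ∀ f, d f 1 = 0)
    (hdmul : ∀ (f : Module.Dual k V) (w : V) (x : ExteriorAlgebra k V),
      d f (ExteriorAlgebra.ι k w * x) = f w • x - ExteriorAlgebra.ι k w * d f x)
    (f : Module.Dual k V) :
    ∀ (r : ℕ) (ix : Fin (r + 1) → Fin l), StrictMono ix →
      d f (mon bV ix) ∈ Submodule.span k {x : ExteriorAlgebra k V |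
        ∃ iy : Fin r → Fin l, StrictMono iy ∧ (∀ j, ix 0 ≤ iy j) ∧ x = mon bV iy} := by
  intro r
  induction r with
  | zero =>
    intro ix _
    rw [mon_succ, mon_zero, hdmul, hd1, mul_zero, sub_zero]
    refine Submodule.smul_mem _ _ (Submodule.subset_span ?_)
    exact ⟨Fin.elim0, fun a => a.elim0, fun a => a.elim0, (mon_zero bV _).symm⟩
  | succ r IH =>
    intro ix hix
    rw [mon_succ, hdmul]
    have htail : StrictMono (ix ∘ Fin.succ) := hix.comp Fin.strictMono_succ
    refine Submodule.sub_mem _ (Submodule.smul_mem _ _ (Submodule.subset_span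
      ⟨ix ∘ Fin.succ, htail, fun j => (hix (Fin.succ_pos j)).le, rfl⟩)) ?_
    have hIH := IH (ix ∘ Fin.succ) htail
    refine Submodule.span_induction
      (p := fun z _ => ExteriorAlgebra.ι k (bV (ix 0)) * z ∈ Submodule.span k
        {x : ExteriorAlgebra k V | ∃ iy : Fin (r + 1) → Fin l, StrictMono iy ∧
          (∀ j, ix 0 ≤ iy j) ∧ x = mon bV iy}) ?_ ?_ ?_ ?_ hIH
    · rintro z ⟨iy, hiy, hbd, rfl⟩
      have hlt' : ∀ j, ix 0 < iy j := fun j => (hix (Fin.succ_pos 0)).trans_le (hbd j)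
      have hcomp : Fin.cons (ix 0) iy ∘ Fin.succ = iy := funext fun j => Fin.cons_succ _ _ j
      have hcons : ExteriorAlgebra.ι k (bV (ix 0)) * mon bV iy =
          mon bV (Fin.cons (ix 0) iy) := by
        rw [mon_succ, Fin.cons_zero, hcomp]
      show ExteriorAlgebra.ι k (bV (ix 0)) * mon bV iy ∈ _
      rw [hcons]
      refine Submodule.subset_span ⟨Fin.cons (ix 0) iy, strictMono_cons hiy hlt', ?_, rfl⟩
      intro j
      induction j using Fin.cases with
      | zero => simp
      | succ i => simpa using (hlt' i).le
    · show ExteriorAlgebra.ι k (bV (ix 0)) * 0 ∈ _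
      rw [mul_zero]; exact Submodule.zero_mem _
    · intro x y _ _ hx hy
      show ExteriorAlgebra.ι k (bV (ix 0)) * (x + y) ∈ _
      rw [mul_add]; exact Submodule.add_mem _ hx hy
    · intro a x _ hx
      show ExteriorAlgebra.ι k (bV (ix 0)) * (a • x) ∈ _
      rw [mul_smul_comm]; exact Submodule.smul_mem _ _ hx

end LambdaAux

namespace LambdaAux

variable {k V : Type*} [Field k] [AddCommGroup V] [Module k V] {l : ℕ}

lemma lemA (bV : Module.Basis (Fin l) k V)
    (d : Module.Dual k V → Module.End k (ExteriorAlgebra k V))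
    (hd1 : ∀ f, d f 1 = 0)
    (hdmul : ∀ (f : Module.Dual k V) (w : V) (x : ExteriorAlgebra k V),
      d f (ExteriorAlgebra.ι k w * x) = f w • x - ExteriorAlgebra.ι k w * d f x)
    (Φ : ExteriorAlgebra k V →ₗ[k] k)
    (hΦlow : ∀ r : ℕ, r < l → ∀ ix : Fin r → Fin l, StrictMono ix → Φ (mon bV ix) = 0)
    (f : Module.Dual k V) (t : ExteriorAlgebra k V) : Φ (d f t) = 0 := by
  set N : Submodule k (ExteriorAlgebra k V) := Submodule.span k {x : ExteriorAlgebra k V |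
    ∃ r : ℕ, r < l ∧ ∃ ix : Fin r → Fin l, StrictMono ix ∧ x = mon bV ix} with hNdef
  have hN : N ≤ LinearMap.ker Φ := by
    rw [hNdef]
    refine Submodule.span_le.2 ?_
    rintro x ⟨r, hr, ix, hix, rfl⟩
    exact LinearMap.mem_ker.mpr (hΦlow r hr ix hix)
  suffices h : d f t ∈ N by exact LinearMap.mem_ker.mp (hN h)
  have ht : t ∈ Submodule.span k {x : ExteriorAlgebra k V |
      ∃ (r : ℕ) (ix : Fin r → Fin l), StrictMono ix ∧ x = mon bV ix} := by
    rw [span_mon_top]; trivial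
  refine Submodule.span_induction (p := fun t _ => d f t ∈ N) ?_ ?_ ?_ ?_ ht
  · rintro x ⟨r, ix, hix, rfl⟩
    match r, ix with
    | 0, ix =>
      show d f (mon bV ix) ∈ N
      rw [mon_zero, hd1]; exact Submodule.zero_mem _
    | r + 1, ix =>
      have hrl : r + 1 ≤ l := by
        have := Fintype.card_le_of_injective ix hix.injective
        simpa using this
      have hB := lemB bV d hd1 hdmul f r ix hix
      refine Submodule.span_le.2 ?_ hB
      rintro x ⟨iy, hiy, _, rfl⟩
      exact Submodule.subset_span ⟨r, lt_of_lt_of_le (Nat.lt_succ_self r) hrl, iy, hiy, rfl⟩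
  · show d f 0 ∈ N
    rw [map_zero]; exact Submodule.zero_mem _
  · intro x y _ _ hx hy
    show d f (x + y) ∈ N
    rw [map_add]; exact Submodule.add_mem _ hx hy
  · intro a x _ hx
    show d f (a • x) ∈ N
    rw [map_smul]; exact Submodule.smul_mem _ _ hx

end LambdaAux

set_option maxHeartbeats 1000000 in
theorem lambda_involution_compat (k V : Type*) [Field k] (h2 : (2 : k) ≠ 0)
    (l : ℕ) (hl : 1 ≤ l)
    [AddCommGroup V] [Module k V] [FiniteDimensional k V]
    (hdim : Module.finrank k V = l) (bV : Module.Basis (Fin l) k V)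
    -- the superderivations `df`
    (d : Module.Dual k V → Module.End k (ExteriorAlgebra k V))
    (hd1 : ∀ f, d f 1 = 0)
    (hdmul : ∀ (f : Module.Dual k V) (w : V) (x : ExteriorAlgebra k V),
      d f (ExteriorAlgebra.ι k w * x) = f w • x - ExteriorAlgebra.ι k w * d f x)
    -- the determinant form `Φ`
    (Φ : ExteriorAlgebra k V →ₗ[k] k)
    (hΦtop : Φ (List.ofFn fun i : Fin l => ExteriorAlgebra.ι k (bV i)).prod = 1)
    (hΦlow : ∀ r : ℕ, r < l → ∀ ix : Fin r → Fin l, StrictMono ix →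
      Φ (List.ofFn fun j : Fin r => ExteriorAlgebra.ι k (bV (ix j))).prod = 0)
    -- the antiautomorphism `bar` with `v̄ = -v`
    (bbar : ExteriorAlgebra k V →ₗ[k] ExteriorAlgebra k V)
    (hbar1 : bbar 1 = 1)
    (hbarmul : ∀ x y : ExteriorAlgebra k V, bbar (x * y) = bbar y * bbar x)
    (hbarι : ∀ v : V, bbar (ExteriorAlgebra.ι k v) = - ExteriorAlgebra.ι k v)
    -- the involution `τ'` of `Cl(V ⊕ V*, q)` with `τ'(x) = -x` on generators
    (τ' : CliffordAlgebra (QuadraticForm.dualProd k V) →ₗ[k]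
        CliffordAlgebra (QuadraticForm.dualProd k V))
    (hτ'1 : τ' 1 = 1)
    (hτ'mul : ∀ a b : CliffordAlgebra (QuadraticForm.dualProd k V),
      τ' (a * b) = τ' b * τ' a)
    (hτ'ι : ∀ x : Module.Dual k V × V,
      τ' (CliffordAlgebra.ι (QuadraticForm.dualProd k V) x) =
        - CliffordAlgebra.ι (QuadraticForm.dualProd k V) x)
    -- the isomorphism `Λ`
    (Λ : CliffordAlgebra (QuadraticForm.dualProd k V) ≃ₐ[k]
        Module.End k (ExteriorAlgebra k V))
    (hΛ : ∀ (f : Module.Dual k V) (v : V),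
      Λ (CliffordAlgebra.ι (QuadraticForm.dualProd k V) (f, v)) =
        LinearMap.mulLeft k (ExteriorAlgebra.ι k v) + d f) :
    (∀ (v : V) (s t : ExteriorAlgebra k V),
        Φ (bbar (ExteriorAlgebra.ι k v * s) * t) =
          - Φ (bbar s * (ExteriorAlgebra.ι k v * t))) ∧
    (∀ (f : Module.Dual k V) (s t : ExteriorAlgebra k V),
        Φ (bbar (d f s) * t) = - Φ (bbar s * d f t)) ∧
    (∀ (x : CliffordAlgebra (QuadraticForm.dualProd k V))
        (s t : ExteriorAlgebra k V),
        Φ (bbar (Λ x s) * t) = Φ (bbar s * (Λ (τ' x) t))) := by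
  have hΦlow' : ∀ r : ℕ, r < l → ∀ ix : Fin r → Fin l, StrictMono ix →
      Φ (LambdaAux.mon bV ix) = 0 := hΦlow
  have hA : ∀ (f : Module.Dual k V) (t : ExteriorAlgebra k V), Φ (d f t) = 0 :=
    LambdaAux.lemA bV d hd1 hdmul Φ hΦlow'
  -- skew-adjointness of left multiplication
  have h1 : ∀ (v : V) (s t : ExteriorAlgebra k V),
      Φ (bbar (ExteriorAlgebra.ι k v * s) * t) =
        - Φ (bbar s * (ExteriorAlgebra.ι k v * t)) := by
    intro v s t
    rw [hbarmul, hbarι, mul_neg, neg_mul, map_neg, mul_assoc]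
  -- skew-adjointness of d f : first the key step for monomials
  have hstep : ∀ (f : Module.Dual k V) (v : V) (m : ExteriorAlgebra k V),
      (∀ t, Φ (bbar (d f m) * t) = - Φ (bbar m * d f t)) →
      ∀ t, Φ (bbar (d f (ExteriorAlgebra.ι k v * m)) * t) =
        - Φ (bbar (ExteriorAlgebra.ι k v * m) * d f t) := by
    intro f v m IH t
    rw [hdmul]
    rw [map_sub, map_smul, hbarmul, hbarι, mul_neg, sub_neg_eq_add, add_mul,
      smul_mul_assoc, map_add, map_smul, mul_assoc, IH (ExteriorAlgebra.ι k v * t),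
      hdmul, mul_sub, mul_smul_comm, map_sub, map_smul]
    rw [hbarmul, hbarι, mul_neg, neg_mul, map_neg, mul_assoc]
    simp only [smul_eq_mul]
    ring
  have h2 : ∀ (f : Module.Dual k V) (s t : ExteriorAlgebra k V),
      Φ (bbar (d f s) * t) = - Φ (bbar s * d f t) := by
    intro f s
    have hmonP : ∀ (n : ℕ) (w : Fin n → V) (t : ExteriorAlgebra k V),
        Φ (bbar (d f ((List.ofFn fun i => ExteriorAlgebra.ι k (w i)).prod)) * t) =
          - Φ (bbar ((List.ofFn fun i => ExteriorAlgebra.ι k (w i)).prod) * d f t) := by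
      intro n
      induction n with
      | zero =>
        intro w t
        simp only [List.ofFn_zero, List.prod_nil, hd1, map_zero, zero_mul, hbar1, one_mul]
        rw [hA f t]
        simp
      | succ n IH =>
        intro w t
        rw [List.ofFn_succ, List.prod_cons]
        exact hstep f (w 0) _ (fun t' => IH (fun i => w i.succ) t') t
    have hs : s ∈ Submodule.span k (Set.range fun x : Σ n, (Fin n → V) =>
        ExteriorAlgebra.ιMulti k x.1 x.2) := by
      rw [ExteriorAlgebra.ιMulti_span]; trivial
    refine Submodule.span_induction
      (p := fun s _ => ∀ t, Φ (bbar (d f s) * t) = - Φ (bbar s * d f t)) ?_ ?_ ?_ ?_ hs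
    · rintro x ⟨⟨n, w⟩, rfl⟩
      intro t
      show Φ (bbar (d f (ExteriorAlgebra.ιMulti k n w)) * t) =
        - Φ (bbar (ExteriorAlgebra.ιMulti k n w) * d f t)
      rw [ExteriorAlgebra.ιMulti_apply]
      exact hmonP n w t
    · intro t
      show Φ (bbar (d f 0) * t) = - Φ (bbar 0 * d f t)
      simp
    · intro x y _ _ hx hy t
      show Φ (bbar (d f (x + y)) * t) = - Φ (bbar (x + y) * d f t)
      rw [map_add (d f), map_add bbar, map_add bbar, add_mul, add_mul, map_add, map_add,
        hx t, hy t]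
      ring
    · intro a x _ hx t
      show Φ (bbar (d f (a • x)) * t) = - Φ (bbar (a • x) * d f t)
      rw [map_smul (d f), map_smul bbar, map_smul bbar, smul_mul_assoc, smul_mul_assoc,
        map_smul, map_smul, hx t]
      simp only [smul_eq_mul]
      ring
  refine ⟨h1, h2, ?_⟩
  intro x
  induction x using CliffordAlgebra.induction with
  | algebraMap r =>
    intro s t
    have hτ : τ' (algebraMap k _ r) = algebraMap k _ r := by
      rw [Algebra.algebraMap_eq_smul_one, map_smul, hτ'1]
    rw [hτ, AlgEquiv.commutes, Module.algebraMap_end_apply, Module.algebraMap_end_apply,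
      map_smul, smul_mul_assoc, map_smul, mul_smul_comm, map_smul]
  | ι m =>
    obtain ⟨f, v⟩ := m
    intro s t
    rw [hτ'ι, map_neg, hΛ]
    simp only [LinearMap.add_apply, LinearMap.neg_apply, LinearMap.mulLeft_apply,
      map_add, add_mul, mul_neg, mul_add, map_neg, map_add]
    rw [h1 v s t, h2 f s t]
    ring
  | mul a b ha hb =>
    intro s t
    rw [hτ'mul, map_mul Λ, map_mul Λ, Module.End.mul_apply, Module.End.mul_apply]
    exact (ha (Λ b s) t).trans (hb s (Λ (τ' a) t))
  | add a b ha hb =>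
    intro s t
    rw [map_add τ', map_add Λ, map_add Λ, LinearMap.add_apply, LinearMap.add_apply,
      map_add bbar, add_mul, mul_add, map_add Φ, map_add Φ, ha s t, hb s t]
end
end

section
/- In an alternative k-algebra A, for all a, b ∈ A one has [ad_a, ad_b] = 2D_{a,b} − ad_{[a,b]} as endomorphisms of A. -/
/-!
STATEMENT 15: In an alternative `k`-algebra `A`, for all `a, b ∈ A` one has
`[ad_a, ad_b] = 2 D_{a,b} − ad_{[a,b]}` as endomorphisms of `A`, where `ad_a = L_a − R_a`
and `D_{a,b}` is the inner derivation `D_{a,b}(c) = [[a,b],c] − 3(a,b,c)`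
(as an operator, `D_{a,b} = ad_{[a,b]} − 3·(L_{ab} − L_a ∘ L_b)`).
-/

noncomputable section

theorem alternative_ad_commutator (k A : Type*) [Field k] (h2 : (2 : k) ≠ 0)
    [NonUnitalNonAssocRing A] [Module k A] [SMulCommClass k A A] [IsScalarTower k A A]
    -- the associator is alternating
    (halt1 : ∀ a b : A, (a * a) * b - a * (a * b) = 0)
    (halt2 : ∀ a b : A, (a * b) * b - a * (b * b) = 0)
    (halt3 : ∀ a b : A, (a * b) * a - a * (b * a) = 0) :
    ∀ a b : A,
      (LinearMap.mulLeft k a - LinearMap.mulRight k a) *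
          (LinearMap.mulLeft k b - LinearMap.mulRight k b) -
        (LinearMap.mulLeft k b - LinearMap.mulRight k b) *
          (LinearMap.mulLeft k a - LinearMap.mulRight k a) =
      (2 : k) • ((LinearMap.mulLeft k (a * b - b * a) -
            LinearMap.mulRight k (a * b - b * a)) -
          (3 : k) • (LinearMap.mulLeft k (a * b) -
            LinearMap.mulLeft k a * LinearMap.mulLeft k b)) -
        (LinearMap.mulLeft k (a * b - b * a) -
          LinearMap.mulRight k (a * b - b * a)) := by
  -- linearized alternating laws
  have L1 : ∀ x y z : A, (x * y) * z - x * (y * z) + ((y * x) * z - y * (x * z)) = 0 := by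
    intro x y z
    have h := halt1 (x + y) z
    have h1 := halt1 x z
    have h2 := halt1 y z
    simp only [add_mul, mul_add] at h
    linear_combination (norm := abel) h - h1 - h2
  have L2 : ∀ x y z : A, (x * y) * z - x * (y * z) + ((x * z) * y - x * (z * y)) = 0 := by
    intro x y z
    have h := halt2 x (y + z)
    have h1 := halt2 x y
    have h2 := halt2 x z
    simp only [add_mul, mul_add] at h
    linear_combination (norm := abel) h - h1 - h2
  intro a b
  ext c
  simp only [LinearMap.sub_apply, Module.End.mul_apply, LinearMap.smul_apply,
    LinearMap.mulLeft_apply, LinearMap.mulRight_apply, mul_sub, sub_mul, smul_sub]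
  -- rewrite all products in terms of left-associated products and s := (ab)c - a(bc)
  have habc : a * (b * c) = (a * b) * c - ((a * b) * c - a * (b * c)) := by abel
  have hacb : a * (c * b) = (a * c) * b + ((a * b) * c - a * (b * c)) := by
    linear_combination (norm := abel) -L2 a b c
  have hbac : b * (a * c) = (b * a) * c + ((a * b) * c - a * (b * c)) := by
    linear_combination (norm := abel) -L1 a b c
  have hbca : b * (c * a) = (b * c) * a - ((a * b) * c - a * (b * c)) := by
    linear_combination (norm := abel) L1 a b c - L2 b a c
  have hcab : c * (a * b) = (c * a) * b - ((a * b) * c - a * (b * c)) := by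
    linear_combination (norm := abel) L2 a b c - L1 a c b
  have hcba : c * (b * a) = (c * b) * a + ((a * b) * c - a * (b * c)) := by
    linear_combination (norm := abel) L2 b a c - L1 a b c - L1 b c a
  rw [habc, hacb, hbac, hbca, hcab, hcba]
  module
end
end

section
/- Let C be a unital composition algebra over k. Then for all a, b, c ∈ C⁰ (the orthogonal complement of 1 with respect to the polar form of the norm), D_{a,b}(c) + ½[[a,b],c] = 3( n(a,c)b − n(b,c)a ). -/
/-!
STATEMENT 16: Let `C` be a unital composition algebra over `k` (a unital, not necessarily
associative `k`-algebra with a nondegenerate multiplicative quadratic form `n`).  Then for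
all `a, b, c ∈ C⁰ = {x : n(1,x) = 0}` (orthogonal complement of `1` w.r.t. the polar form),
`D_{a,b}(c) + ½[[a,b],c] = 3( n(a,c)b − n(b,c)a )`,
where `D_{a,b}(c) = [[a,b],c] − 3(a,b,c)` and `(a,b,c) = (ab)c − a(bc)`.
-/

noncomputable section

theorem composition_algebra_Dab_identity (k C : Type*) [Field k] (h2 : (2 : k) ≠ 0)
    [NonAssocRing C] [Module k C] [SMulCommClass k C C] [IsScalarTower k C C]
    (n : QuadraticForm k C)
    -- the norm is multiplicative
    (hn : ∀ x y : C, n (x * y) = n x * n y)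
    -- the norm is nondegenerate
    (hnd : ∀ x : C, (∀ y : C, QuadraticMap.polar n x y = 0) → x = 0) :
    ∀ a b c : C,
      QuadraticMap.polar n 1 a = 0 → QuadraticMap.polar n 1 b = 0 →
      QuadraticMap.polar n 1 c = 0 →
      (((a * b - b * a) * c - c * (a * b - b * a)) -
          (3 : k) • ((a * b) * c - a * (b * c))) +
        (2 : k)⁻¹ • ((a * b - b * a) * c - c * (a * b - b * a)) =
      (3 : k) • (QuadraticMap.polar n a c • b - QuadraticMap.polar n b c • a) := by
  intro a b c ha hb hc
  set B : C → C → k := QuadraticMap.polar n with hB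
  -- linearized composition law, step 1
  have L1 : ∀ x y z : C, B (x*y) (x*z) = n x * B y z := by
    intro x y z
    simp only [hB, QuadraticMap.polar, ← mul_add, hn]
    ring
  -- full linearization
  have L2 : ∀ x y w z : C, B (x*y) (w*z) + B (w*y) (x*z) = B x w * B y z := by
    intro x y w z
    have h := L1 (x+w) y z
    have hx := L1 x y z
    have hw := L1 w y z
    simp only [add_mul, hB, QuadraticMap.polar_add_left, QuadraticMap.polar_add_right] at h
    have hnw : n (x + w) = B x w + n x + n w := by
      simp only [hB, QuadraticMap.polar]; ring
    rw [hnw] at h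
    linear_combination h - hx - hw
  have L3 : ∀ x y z : C, B (x*y) z + B y (x*z) = B x 1 * B y z := by
    intro x y z
    have h := L2 x y 1 z
    simpa using h
  have L4 : ∀ x y w : C, B (x*y) w + B (w*y) x = B x w * B y 1 := by
    intro x y w
    have h := L2 x y w 1
    simpa using h
  have ha1 : B a 1 = 0 := by rw [hB, QuadraticMap.polar_comm]; exact ha
  have hb1 : B b 1 = 0 := by rw [hB, QuadraticMap.polar_comm]; exact hb
  have hc1 : B c 1 = 0 := by rw [hB, QuadraticMap.polar_comm]; exact hc
  -- B 1 (x*t) = - B x t  for x ⊥ 1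
  have Lone : ∀ x t : C, B x 1 = 0 → B 1 (x*t) = - B x t := by
    intro x t hx
    have h := L4 x t 1
    rw [one_mul, hx, zero_mul] at h
    have h1 : B (x*t) 1 = B 1 (x*t) := QuadraticMap.polar_comm n _ _
    have h2 : B t x = B x t := QuadraticMap.polar_comm n _ _
    linear_combination h - h1 - h2
  -- quadratic relation on C⁰
  have Lq : ∀ x y : C, B x 1 = 0 → B y 1 = 0 → x*y + y*x = -(B x y • (1:C)) := by
    intro x y hx hy
    have key : ∀ t : C, B (x*y + y*x + B x y • (1:C)) t = 0 := by
      intro t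
      have h1 := L4 x y t
      have h2 := L4 y x t
      have h3 := L3 t y x
      rw [hy, mul_zero] at h1
      rw [hx, mul_zero] at h2
      have e1 : B (y*x) t = B t (y*x) := QuadraticMap.polar_comm n _ _
      have e2 : B y (t*x) = B (t*x) y := QuadraticMap.polar_comm n _ _
      have e3 : B y x = B x y := QuadraticMap.polar_comm n _ _
      have e4 : B t 1 = B 1 t := QuadraticMap.polar_comm n _ _
      have expand : B (x*y + y*x + B x y • (1:C)) t
          = B (x*y) t + B (y*x) t + B x y * B 1 t := by
        simp only [hB, QuadraticMap.polar_add_left, QuadraticMap.polar_smul_left,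
          smul_eq_mul]
      rw [expand]
      linear_combination h1 + h2 - h3 - B x y * e4 - B t 1 * e3 + e2
    have h0 : x*y + y*x + B x y • (1:C) = 0 := hnd _ key
    exact eq_neg_of_add_eq_zero_left h0
  -- key identity
  have E : a*(b*c) - c*(a*b) = B a c • b - B b c • a := by
    have hq := Lq b c hb1 hc1
    have hcb : c*b = -(B b c • (1:C)) - b*c := eq_sub_of_add_eq' hq
    have key : ∀ t : C, B (a*(b*c) - c*(a*b) - (B a c • b - B b c • a)) t = 0 := by
      intro t
      have h1 := L3 a (b*c) t
      have h2 := L3 c (a*b) t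
      have h3 := L2 a b c t
      rw [ha1, zero_mul] at h1
      rw [hc1, zero_mul] at h2
      have h4 : B (c*b) (a*t) = B b c * B a t - B (b*c) (a*t) := by
        rw [hcb]
        rw [hB] at *
        rw [QuadraticMap.polar_sub_left, QuadraticMap.polar_neg_left,
          QuadraticMap.polar_smul_left, smul_eq_mul, Lone a t ha1]
        ring
      have expand : B (a*(b*c) - c*(a*b) - (B a c • b - B b c • a)) t
          = B (a*(b*c)) t - B (c*(a*b)) t - B a c * B b t + B b c * B a t := by
        simp only [hB, QuadraticMap.polar_sub_left, QuadraticMap.polar_smul_left,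
          smul_eq_mul]
        ring
      rw [expand]
      linear_combination h1 - h2 + h3 - h4
    have h0 := hnd _ key
    exact sub_eq_zero.mp h0
  -- assemble
  have hq' : b*a = -(B a b • (1:C)) - a*b := eq_sub_of_add_eq' (Lq a b ha1 hb1)
  rw [hq']
  simp only [mul_sub, sub_mul, mul_add, add_mul, mul_neg, neg_mul, smul_mul_assoc,
    mul_smul_comm, mul_one, one_mul]
  have E' : a*(b*c) = B a c • b - B b c • a + c*(a*b) := sub_eq_iff_eq_add.mp E
  rw [E']
  match_scalars <;> field_simp <;> ring
end
end

section
/- Let A be a unital commutative (not necessarily associative) k-algebra, t : A → k a linear map with t(1) = 1, and f ∈ A an idempotent (f² = f) such that f and 1 are linearly independent. If f satisfies the degree-3 Cayley–Hamilton equation ch₃(f) = f³ − 3t(f)f² + (9/2·t(f)² − 3/2·t(f²))f − (t(f³) − 9/2·t(f²)t(f) + 9/2·t(f)³)1 = 0 (where f³ = f²·f), then t(f) = 1/3 or t(f) = 2/3. -/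
/-!
STATEMENT 18: Let `A` be a unital commutative (not necessarily associative) `k`-algebra,
`t : A → k` a linear map with `t(1) = 1`, and `f ∈ A` an idempotent such that `f` and `1`
are linearly independent.  If `f` satisfies the degree-3 Cayley–Hamilton equation
`ch₃(f) = f³ − 3t(f)f² + (9/2·t(f)² − 3/2·t(f²))f − (t(f³) − 9/2·t(f²)t(f) + 9/2·t(f)³)1 = 0`
(with `f³ = f²·f`), then `t(f) = 1/3` or `t(f) = 2/3`.
-/

noncomputable section

theorem cayley_hamilton_idempotent_trace (k A : Type*) [Field k]
    (h2 : (2 : k) ≠ 0) (h3 : (3 : k) ≠ 0)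
    [NonAssocRing A] [Module k A] [SMulCommClass k A A] [IsScalarTower k A A]
    (hcomm : ∀ x y : A, x * y = y * x)
    (t : A →ₗ[k] k) (ht1 : t 1 = 1)
    (f : A) (hf : f * f = f)
    (hli : LinearIndependent k ![(1 : A), f])
    (hch : ((f * f) * f) - (3 * t f) • (f * f) +
        ((9 / 2 : k) * (t f) ^ 2 - (3 / 2 : k) * t (f * f)) • f -
        (t ((f * f) * f) - (9 / 2 : k) * t (f * f) * t f +
          (9 / 2 : k) * (t f) ^ 3) • (1 : A) = 0) :
    t f = (1 / 3 : k) ∨ t f = (2 / 3 : k) := by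
  rw [hf, hf] at hch
  set τ := t f with hτ
  have key : (-(τ - (9 / 2 : k) * τ * τ + (9 / 2 : k) * τ ^ 3)) • (1 : A) +
      (1 - 3 * τ + ((9 / 2 : k) * τ ^ 2 - (3 / 2 : k) * τ)) • f = 0 := by
    rw [← hch]; module
  have hcoef := (Fintype.linearIndependent_iff.mp hli)
    ![-(τ - (9 / 2 : k) * τ * τ + (9 / 2 : k) * τ ^ 3),
      1 - 3 * τ + ((9 / 2 : k) * τ ^ 2 - (3 / 2 : k) * τ)]
    (by simpa [Fin.sum_univ_two] using key) 1
  simp at hcoef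
  have hcoef2 : 9 * τ ^ 2 - 9 * τ + 2 = 0 := by
    field_simp at hcoef
    linear_combination hcoef
  have hfac : (3 * τ - 1) * (3 * τ - 2) = 0 := by linear_combination hcoef2
  rcases mul_eq_zero.mp hfac with h | h
  · left; field_simp; linear_combination h
  · right; field_simp; linear_combination h
end
end
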